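/- arXiv:math/9608216 — 5 statements merged into one kernel-verified Lean document; each statement's English description precedes it below -/
import Mathlib

section
/- Let L be a first-order language and T a satisfiable complete L-theory. Let (φ_i)_{i ∈ I} be an ∞-definable equivalence relation over ∅ modulo T on n-tuples which is coarser than equality of types, and let p, q be complete n-types of T over the empty set. If in some model M of T there are n-tuples ā realizing p and b̄ realizing q with M ⊨ φ_i(ā, b̄) for all i, then in every model M' of T and for all n-tuples ā' realizing p and b̄' realizing q, M' ⊨ φ_i(ā', b̄') for all i. (Equivalently: either p(x̄) ∪ q(ȳ) entails the relation, or p(x̄) ∪ q(ȳ) entails its negation, modulo T.) -/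
open FirstOrder FirstOrder.Language

universe u v w u'

/-- A family `φ : I → L.Formula (Fin n ⊕ Fin n)` of formulas in a pair of `n`-tuples of free
variables is an ∞-definable equivalence relation over `∅` modulo `T`: in every model of `T`,
the relation defined by the simultaneous satisfaction of all the `φ i` is reflexive, symmetric
and transitive. -/
def IsInfEqRel {L : FirstOrder.Language.{v, w}} (T : L.Theory) {n : ℕ} {I : Type u'}
    (φ : I → L.Formula (Fin n ⊕ Fin n)) : Prop :=
  (∀ (M : Type u) [L.Structure M] [Nonempty M], M ⊨ T →
    ∀ (a : Fin n → M) (i : I), (φ i).Realize (Sum.elim a a)) ∧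
  (∀ (M : Type u) [L.Structure M] [Nonempty M], M ⊨ T →
    ∀ a b : Fin n → M, (∀ i, (φ i).Realize (Sum.elim a b)) →
      ∀ i, (φ i).Realize (Sum.elim b a)) ∧
  (∀ (M : Type u) [L.Structure M] [Nonempty M], M ⊨ T →
    ∀ a b c : Fin n → M, (∀ i, (φ i).Realize (Sum.elim a b)) →
      (∀ i, (φ i).Realize (Sum.elim b c)) → ∀ i, (φ i).Realize (Sum.elim a c))

/-- A single formula `ψ(x̄, ȳ)` defines an equivalence relation modulo `T`: in every model of `T`
the binary relation on `n`-tuples that it defines is reflexive, symmetric and transitive. -/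
def DefinesEqRel {L : FirstOrder.Language.{v, w}} (T : L.Theory) {n : ℕ}
    (ψ : L.Formula (Fin n ⊕ Fin n)) : Prop :=
  ∀ (M : Type u) [L.Structure M] [Nonempty M], M ⊨ T →
    (∀ a : Fin n → M, ψ.Realize (Sum.elim a a)) ∧
    (∀ a b : Fin n → M, ψ.Realize (Sum.elim a b) → ψ.Realize (Sum.elim b a)) ∧
    (∀ a b c : Fin n → M, ψ.Realize (Sum.elim a b) → ψ.Realize (Sum.elim b c) →
      ψ.Realize (Sum.elim a c))

/-- The relation defined by the family `φ` is coarser than equality of types over `∅`: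
in every model of `T`, any two `n`-tuples satisfying exactly the same `L`-formulas are related. -/
def CoarserThanTypeEq {L : FirstOrder.Language.{v, w}} (T : L.Theory) {n : ℕ} {I : Type u'}
    (φ : I → L.Formula (Fin n ⊕ Fin n)) : Prop :=
  ∀ (M : Type u) [L.Structure M] [Nonempty M], M ⊨ T →
    ∀ a b : Fin n → M, (∀ θ : L.Formula (Fin n), θ.Realize a ↔ θ.Realize b) →
      ∀ i, (φ i).Realize (Sum.elim a b)


/-- The `n`-tuple `a` in a model of `T` realizes the complete `n`-type `p` of `T` over the empty
set: `a` satisfies exactly the formulas in `p`. -/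
def RealizesType {L : FirstOrder.Language.{v, w}} {T : L.Theory} {n : ℕ}
    (p : T.CompleteType (Fin n)) {M : Type u} [L.Structure M] (a : Fin n → M) : Prop :=
  ∀ θ : L.Formula (Fin n), θ.Realize a ↔ Formula.equivSentence θ ∈ p

/-! Since `T` is complete, `M'` is elementarily equivalent to `M`, so the type of `(a', b')` is
finitely satisfiable in `M` and is therefore realized by a pair `(c, d)` in an ultrapower of `M`;
indexing the ultrapower by tuples of `M` keeps it in the universe of `M`, where the hypotheses on
`φ` apply. The diagonal copy of `(a, b)` lies in the same ultrapower. There `c` and `a` realize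
`p`, and `d` and `b` realize `q`, so coarseness gives `c ~ a` and `d ~ b`, and `a ~ b` yields
`c ~ d` by symmetry and transitivity; as `(c, d)` has the type of `(a', b')`, also `a' ~ b'`. -/

namespace FirstOrder.Language

variable {L : FirstOrder.Language.{v, w}}

theorem Formula.realize_iff_of_forall_realize_imp {M N α : Type*} [L.Structure M]
    [L.Structure N] {v : α → M} {w : α → N}
    (h : ∀ ψ : L.Formula α, ψ.Realize v → ψ.Realize w) (ψ : L.Formula α) :
    ψ.Realize v ↔ ψ.Realize w :=
  ⟨h ψ, fun hw => by_contra fun hv =>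
    Formula.realize_not.1 (h ψ.not (Formula.realize_not.2 hv)) hw⟩

theorem Formula.realize_comp_iff_of_forall_realize_iff {M N α β : Type*} [L.Structure M]
    [L.Structure N] {v : α → M} {w : α → N}
    (h : ∀ ψ : L.Formula α, ψ.Realize v ↔ ψ.Realize w) (f : β → α) (θ : L.Formula β) :
    θ.Realize (v ∘ f) ↔ θ.Realize (w ∘ f) := by
  simpa only [Formula.realize_relabel] using h (θ.relabel f)

theorem ElementarilyEquivalent.exists_realize_of_realize {M N α : Type*} [L.Structure M]
    [L.Structure N] [Finite α] (h : M ≅[L] N) {ψ : L.Formula α} {w : α → N}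
    (hw : ψ.Realize w) : ∃ v : α → M, ψ.Realize v := by
  have hN : N ⊨ (ψ.relabel (Sum.inr : α → Empty ⊕ α)).iExs α := by
    simp only [Sentence.Realize, Formula.realize_iExs, Formula.realize_relabel, Sum.elim_comp_inr]
    exact ⟨w, hw⟩
  simpa only [Sentence.Realize, Formula.realize_iExs, Formula.realize_relabel,
    Sum.elim_comp_inr] using (elementarilyEquivalent_iff.1 h _).2 hN

abbrev Ultrapower {ι : Type*} (U : Ultrafilter ι) (M : Type*) : Type _ :=
  (U : Filter ι).Product fun _ : ι => M

namespace Ultrapower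

variable {ι M α : Type*}

def diag (U : Ultrafilter ι) (x : M) : Ultrapower U M :=
  ((fun _ => x : ι → M) : (U : Filter ι).Product fun _ : ι => M)

def generic (U : Ultrafilter (α → M)) (k : α) : Ultrapower U M :=
  ((fun v => v k : (α → M) → M) : (U : Filter (α → M)).Product fun _ => M)

variable [L.Structure M] [Nonempty M]

theorem realize_diag_comp (U : Ultrafilter ι) (ψ : L.Formula α) (x : α → M) :
    ψ.Realize (diag U ∘ x) ↔ ψ.Realize x :=
  (Ultraproduct.realize_formula_cast ψ fun k _ => x k).trans Filter.eventually_const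

theorem realize_generic (U : Ultrafilter (α → M)) (ψ : L.Formula α) :
    ψ.Realize (generic U) ↔ ∀ᶠ v in (U : Filter (α → M)), ψ.Realize v :=
  Ultraproduct.realize_formula_cast (M := fun _ : α → M => M) (u := U) ψ fun k v => v k

theorem model (U : Ultrafilter ι) {T : L.Theory} (h : M ⊨ T) : Ultrapower U M ⊨ T :=
  (Theory.model_iff _).2 fun σ hσ =>
    (Ultraproduct.sentence_realize σ).2 (.of_forall fun _ => h.realize_of_mem σ hσ)

end Ultrapower

theorem ElementarilyEquivalent.exists_realize_generic_iff {M N α : Type*} [L.Structure M]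
    [Nonempty M] [L.Structure N] [Finite α] (h : M ≅[L] N) (w : α → N) :
    ∃ U : Ultrafilter (α → M), ∀ ψ : L.Formula α,
      ψ.Realize (Ultrapower.generic U) ↔ ψ.Realize w := by
  let Φ := {ψ : L.Formula α // ψ.Realize w}
  let F : Φ → Filter (α → M) := fun ψ => .principal {v | ψ.1.Realize v}
  -- `Φ` is closed under `⊓`, so the `F ψ` form a directed family of proper filters.
  have : (⨅ ψ, F ψ).NeBot := by
    have : Nonempty Φ := ⟨⟨⊤, by simp⟩⟩
    refine Filter.iInf_neBot_of_directed' ?_ fun ψ => ?_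
    · rintro ⟨ψ, hψ⟩ ⟨χ, hχ⟩
      refine ⟨⟨ψ ⊓ χ, Formula.realize_inf.2 ⟨hψ, hχ⟩⟩, ?_, ?_⟩ <;>
        exact Filter.principal_mono.2 fun v hv => by simp_all
    · exact Filter.principal_neBot_iff.2 (h.exists_realize_of_realize ψ.2)
  refine ⟨Ultrafilter.of (⨅ ψ, F ψ), fun ψ => ?_⟩
  refine (Formula.realize_iff_of_forall_realize_imp (fun χ hχ => ?_) ψ).symm
  exact (Ultrapower.realize_generic _ χ).2 <| Ultrafilter.of_le _ <|
    Filter.mem_iInf_of_mem (⟨χ, hχ⟩ : Φ) (Filter.mem_principal_self _)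

end FirstOrder.Language

theorem IsInfEqRel.realize_of_realize_iff {L : FirstOrder.Language.{v, w}} {T : L.Theory} {n : ℕ}
    {I : Type u'} {φ : I → L.Formula (Fin n ⊕ Fin n)} (heq : IsInfEqRel.{u} T φ)
    (hcoarse : CoarserThanTypeEq.{u} T φ) {N : Type u} [L.Structure N] [Nonempty N] (hN : N ⊨ T)
    {a a' b b' : Fin n → N} (ha : ∀ θ : L.Formula (Fin n), θ.Realize a ↔ θ.Realize a')
    (hb : ∀ θ : L.Formula (Fin n), θ.Realize b ↔ θ.Realize b')
    (hab : ∀ i, (φ i).Realize (Sum.elim a b)) : ∀ i, (φ i).Realize (Sum.elim a' b') :=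
  let ⟨_, hsymm, htrans⟩ := heq
  htrans N hN a' b b' (htrans N hN a' a b (hsymm N hN a a' (hcoarse N hN a a' ha)) hab)
    (hcoarse N hN b b' hb)

theorem RealizesType.realize_iff {L : FirstOrder.Language.{v, w}} {T : L.Theory} {n : ℕ}
    {p : T.CompleteType (Fin n)} {M N : Type u} [L.Structure M] [L.Structure N] {a : Fin n → M}
    {b : Fin n → N} (ha : RealizesType p a) (hb : RealizesType p b) (θ : L.Formula (Fin n)) :
    θ.Realize a ↔ θ.Realize b :=
  (ha θ).trans (hb θ).symm

theorem infEqRel_constant_on_type_pairs_general {L : FirstOrder.Language.{v, w}}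
    (T : L.Theory) (hcomp : T.IsComplete)
    {n : ℕ} {I : Type u'} (φ : I → L.Formula (Fin n ⊕ Fin n))
    (heq : IsInfEqRel.{u} T φ) (hcoarse : CoarserThanTypeEq.{u} T φ)
    (p q : T.CompleteType (Fin n))
    (M : Type u) [L.Structure M] [Nonempty M] (hM : M ⊨ T)
    (a b : Fin n → M) (ha : RealizesType p a) (hb : RealizesType q b)
    (hab : ∀ i, (φ i).Realize (Sum.elim a b)) :
    ∀ (M' : Type u) [L.Structure M'] [Nonempty M'], M' ⊨ T →
      ∀ a' b' : Fin n → M', RealizesType p a' → RealizesType q b' →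
        ∀ i, (φ i).Realize (Sum.elim a' b') := by
  intro M' _ _ hM' a' b' ha' hb' i
  have : M ⊨ T := hM
  have : M' ⊨ T := hM'
  obtain ⟨U, hU⟩ :=
    (hcomp.models_elementarily_equivalent M M').exists_realize_generic_iff (Sum.elim a' b')
  set c := Ultrapower.generic U ∘ Sum.inl
  set d := Ultrapower.generic U ∘ Sum.inr
  have hc : ∀ θ : L.Formula (Fin n), θ.Realize c ↔ θ.Realize a' := by
    simpa only [Sum.elim_comp_inl] using Formula.realize_comp_iff_of_forall_realize_iff hU Sum.inl
  have hd : ∀ θ : L.Formula (Fin n), θ.Realize d ↔ θ.Realize b' := by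
    simpa only [Sum.elim_comp_inr] using Formula.realize_comp_iff_of_forall_realize_iff hU Sum.inr
  set a₀ := Ultrapower.diag U ∘ a
  set b₀ := Ultrapower.diag U ∘ b
  have hac (θ : L.Formula (Fin n)) : θ.Realize a₀ ↔ θ.Realize c :=
    (Ultrapower.realize_diag_comp U θ a).trans ((ha.realize_iff ha' θ).trans (hc θ).symm)
  have hbd (θ : L.Formula (Fin n)) : θ.Realize b₀ ↔ θ.Realize d :=
    (Ultrapower.realize_diag_comp U θ b).trans ((hb.realize_iff hb' θ).trans (hd θ).symm)
  have hab₀ (i : I) : (φ i).Realize (Sum.elim a₀ b₀) := by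
    simpa only [a₀, b₀, Sum.comp_elim] using (Ultrapower.realize_diag_comp U _ _).2 (hab i)
  have hcd := heq.realize_of_realize_iff hcoarse (Ultrapower.model U hM) hac hbd hab₀
  exact (hU (φ i)).1 (by simpa only [c, d, Sum.elim_comp_inl_inr] using hcd i)

/-- Let `T` be a satisfiable complete theory and `(φ_i)` an ∞-definable
equivalence relation over `∅` modulo `T` which is coarser than equality of types, and let `p`,
`q` be complete `n`-types of `T` over `∅`. If in some model of `T` some realizations of `p` and
`q` are related, then in every model of `T` all realizations of `p` and `q` are related. -/
theorem infEqRel_constant_on_type_pairs {L : FirstOrder.Language.{v, w}}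
    (T : L.Theory) (hsat : T.IsSatisfiable) (hcomp : T.IsComplete)
    {n : ℕ} (hn : 0 < n) {I : Type u'} (φ : I → L.Formula (Fin n ⊕ Fin n))
    (heq : IsInfEqRel.{u} T φ) (hcoarse : CoarserThanTypeEq.{u} T φ)
    (p q : T.CompleteType (Fin n))
    (M : Type u) [L.Structure M] [Nonempty M] (hM : M ⊨ T)
    (a b : Fin n → M) (ha : RealizesType p a) (hb : RealizesType q b)
    (hab : ∀ i, (φ i).Realize (Sum.elim a b)) :
    ∀ (M' : Type u) [L.Structure M'] [Nonempty M'], M' ⊨ T →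
      ∀ a' b' : Fin n → M', RealizesType p a' → RealizesType q b' →
        ∀ i, (φ i).Realize (Sum.elim a' b') :=
  infEqRel_constant_on_type_pairs_general T hcomp φ heq hcoarse p q M hM a b ha hb hab
end

section
/- Let L be a countable first-order language and T a satisfiable complete L-theory that is small. Let (φ_i)_{i ∈ I} be an ∞-definable equivalence relation over ∅ modulo T on n-tuples which is coarser than equality of types. Suppose M is a model of T and ā, b̄ are n-tuples of M with M ⊭ φ_{i₀}(ā, b̄) for some i₀ ∈ I. Then there exist L-formulas φ(x̄) and ψ(x̄) in n free variables such that: M ⊨ φ(ā) and M ⊨ ψ(b̄); for every model M' of T and every n-tuple c̄ of M', M' ⊨ φ(c̄) ∨ ψ(c̄); and for every model M' of T and all n-tuples c̄, d̄ of M', if M' ⊨ φ(c̄) and M' ⊨ ψ(d̄) then M' ⊭ φ_i(c̄, d̄) for some i ∈ I. -/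
open FirstOrder FirstOrder.Language

universe u v w u'

/-!
Transfer the relation to the space of complete `n`-types: `p ~ q` when some realizations of `p`
and `q` satisfy all `φ i`. Since `T` is complete, any two types are realized in a common model, so
by coarseness `~` is an equivalence relation and `ā, b̄` are related exactly when their types are.
It is closed, being the continuous image of the compact set of `2n`-types containing every `φ i`.
Hence the quotient of the type space by `~` is compact Hausdorff, and countable as `T` is small;
such a space is totally separated, so some clopen `~`-saturated set of types contains `tp(ā)` but
not `tp(b̄)`. A clopen set of types is defined by a single formula `χ`, and `ψ := ¬χ`.
-/

open Set

section QuotientSeparation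

variable {X Y : Type*} [TopologicalSpace X] [TopologicalSpace Y]

theorem IsClosedMap.normalSpace_of_surjective [NormalSpace X] {f : X → Y} (hf : IsClosedMap f)
    (hcont : Continuous f) (hsurj : Function.Surjective f) : NormalSpace Y where
  normal s t hs ht hst := by
    obtain ⟨U, V, hU, hV, hsU, htV, hUV⟩ :=
      normal_separation (hs.preimage hcont) (ht.preimage hcont) (hst.preimage f)
    refine ⟨(f '' Uᶜ)ᶜ, (f '' Vᶜ)ᶜ, (hf _ hU.isClosed_compl).isOpen_compl,
      (hf _ hV.isClosed_compl).isOpen_compl, ?_, ?_, ?_⟩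
    · rintro y hy ⟨x, hx, rfl⟩
      exact hx (hsU hy)
    · rintro y hy ⟨x, hx, rfl⟩
      exact hx (htV hy)
    · refine Set.disjoint_left.2 fun y hyU hyV => ?_
      obtain ⟨x, rfl⟩ := hsurj y
      have hxU : x ∈ U := by_contra fun hx => hyU ⟨x, hx, rfl⟩
      have hxV : x ∈ V := by_contra fun hx => hyV ⟨x, hx, rfl⟩
      exact Set.disjoint_left.1 hUV hxU hxV

theorem isClosedMap_quotient_mk_of_isClosed [CompactSpace X] {s : Setoid X}
    (hs : IsClosed {x : X × X | s x.1 x.2}) : IsClosedMap (Quotient.mk s) := by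
  intro C hC
  have hsat : Quotient.mk s ⁻¹' (Quotient.mk s '' C) =
      Prod.fst '' ({x : X × X | s x.1 x.2} ∩ Set.univ ×ˢ C) := by
    ext x
    constructor
    · rintro ⟨y, hy, hyx⟩
      exact ⟨(x, y), ⟨Setoid.symm (Quotient.exact hyx), trivial, hy⟩, rfl⟩
    · rintro ⟨⟨_, y⟩, ⟨hxy, -, hy⟩, rfl⟩
      exact ⟨y, hy, Quotient.sound (Setoid.symm hxy)⟩
  refine isQuotientMap_quotient_mk'.isClosed_preimage.1 ?_
  change IsClosed (Quotient.mk s ⁻¹' _)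
  rw [hsat]
  exact isClosedMap_fst_of_compactSpace _ (hs.inter (isClosed_univ.prod hC))

/-- The quotient by `s` is compact Hausdorff, and countable compact Hausdorff spaces are totally
separated. -/
theorem exists_isClopen_saturated_of_not_rel [CompactSpace X] [T2Space X] [Countable X]
    {s : Setoid X} (hs : IsClosed {x : X × X | s x.1 x.2}) {x y : X} (hxy : ¬s x y) :
    ∃ U : Set X, IsClopen U ∧ x ∈ U ∧ y ∉ U ∧
      ∀ a b, s a b → a ∈ U → b ∈ U := by
  have hclosed := isClosedMap_quotient_mk_of_isClosed hs
  have : T1Space (Quotient s) := ⟨fun q => by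
    obtain ⟨z, rfl⟩ := Quotient.mk_surjective q
    simpa using hclosed _ (isClosed_singleton (x := z))⟩
  have : NormalSpace (Quotient s) :=
    hclosed.normalSpace_of_surjective continuous_quotient_mk' Quotient.mk_surjective
  obtain ⟨V, hV, hxV, hyV⟩ :=
    exists_isClopen_of_totally_separated (fun h => hxy (Quotient.exact h))
  exact ⟨Quotient.mk s ⁻¹' V, hV.preimage continuous_quotient_mk', hxV, hyV,
    fun a b hab ha => by rwa [mem_preimage, ← Quotient.sound hab]⟩

end QuotientSeparation

namespace FirstOrder.Language.Theory

variable {L : Language.{v, w}} {T : L.Theory} {α β : Type*}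

section TypeOf

variable {M : Type*} [L.Structure M] [Nonempty M] [M ⊨ T]
variable {N : Type*} [L.Structure N] [Nonempty N] [N ⊨ T]

theorem typeOf_eq_typeOf_iff {x : α → M} {y : α → N} :
    T.typeOf x = T.typeOf y ↔ ∀ θ : L.Formula α, θ.Realize x ↔ θ.Realize y := by
  refine ⟨fun h θ => ?_, fun h => SetLike.ext fun σ => ?_⟩
  · rw [← CompleteType.formula_mem_typeOf (T := T), h, CompleteType.formula_mem_typeOf]
  · rw [CompleteType.mem_typeOf, CompleteType.mem_typeOf, h]

theorem typeOf_comp_eq_typeOf_comp {x : β → M} {y : β → N} (h : T.typeOf x = T.typeOf y)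
    (f : α → β) : T.typeOf (x ∘ f) = T.typeOf (y ∘ f) :=
  typeOf_eq_typeOf_iff.2 fun θ => by
    rw [← Formula.realize_relabel, ← Formula.realize_relabel, typeOf_eq_typeOf_iff.1 h]

theorem typeOf_eq_and_typeOf_eq_of_sum_elim {x : α → M} {x' : β → M} {y : α → N}
    {y' : β → N}
    (h : T.typeOf (Sum.elim x x') = T.typeOf (Sum.elim y y')) :
    T.typeOf x = T.typeOf y ∧ T.typeOf x' = T.typeOf y' :=
  ⟨by simpa using typeOf_comp_eq_typeOf_comp h Sum.inl,
    by simpa using typeOf_comp_eq_typeOf_comp h Sum.inr⟩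

end TypeOf

/-- Downward Löwenheim–Skolem yields a countable model, which can be shrunk into any universe. -/
theorem exists_modelType_typeOf_eq [Countable L.Symbols] [Countable α] (p : T.CompleteType α) :
    ∃ (N : ModelType.{v, w, u} T) (x : α → N), T.typeOf x = p := by
  obtain ⟨M, y, rfl⟩ := T.exists_modelType_is_realized_in p
  suffices ∃ (N : T.ModelType) (x : α → N), Small.{u} N ∧ T.typeOf x = T.typeOf y by
    obtain ⟨N, x, _, hx⟩ := this
    let e : N ≃[L] N.shrink := (equivShrink N).inducedStructureEquiv
    exact ⟨N.shrink, e ∘ x, Eq.trans (typeOf_eq_typeOf_iff.2 fun θ =>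
      StrongHomClass.realize_formula e θ) hx⟩
  rcases finite_or_infinite M with hM | hM
  · exact ⟨M, y, Countable.toSmall M, rfl⟩
  · obtain ⟨S, hyS, hS⟩ := exists_elementarySubstructure_card_eq L (range y) Cardinal.aleph0
      le_rfl (Cardinal.lift_le.2 (Cardinal.mk_le_aleph0_iff.2 (countable_range y).to_subtype))
      (by rw [Cardinal.lift_aleph0, Cardinal.lift_le_aleph0]; exact Cardinal.mk_le_aleph0)
      (Cardinal.lift_le.2 (Cardinal.aleph0_le_mk M))
    have : Countable S := Cardinal.mk_le_aleph0_iff.1 (Cardinal.lift_inj.1 hS).le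
    refine ⟨S.toModel T, fun a => ⟨y a, hyS ⟨a, rfl⟩⟩, Countable.toSmall S, ?_⟩
    exact typeOf_eq_typeOf_iff.2 fun θ => (S.subtype.map_formula θ _).symm

namespace CompleteType

/-- Computed on a chosen realization; by `restrict_typeOf` the choice does not matter. -/
noncomputable def restrict (f : α → β) (p : T.CompleteType β) : T.CompleteType α :=
  T.typeOf ((mem_range.1 (T.exists_modelType_is_realized_in p).choose_spec).choose ∘ f)

theorem restrict_typeOf {M : Type*} [L.Structure M] [Nonempty M] [M ⊨ T] (f : α → β)
    (y : β → M) : (T.typeOf y).restrict f = T.typeOf (y ∘ f) :=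
  typeOf_comp_eq_typeOf_comp
    (mem_range.1 (T.exists_modelType_is_realized_in _).choose_spec).choose_spec f

theorem continuous_restrict (f : α → β) : Continuous (restrict (T := T) f) := by
  refine continuous_generateFrom_iff.2 ?_
  rintro _ ⟨σ, rfl⟩
  convert _root_.CompleteType.isOpen_typesWith
    (Formula.equivSentence ((Formula.equivSentence.symm σ).relabel f))
  ext p
  obtain ⟨M, y, rfl⟩ := T.exists_modelType_is_realized_in p
  simp [restrict_typeOf, Formula.realize_relabel]

theorem exists_realize_of_mem (hT : T.IsComplete) [Finite α] {p : T.CompleteType α}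
    {θ : L.Formula α} (hθ : Formula.equivSentence θ ∈ p) (N : Type*) [L.Structure N]
    [Nonempty N] [N ⊨ T] : ∃ x : α → N, θ.Realize x := by
  obtain ⟨M, y, rfl⟩ := T.exists_modelType_is_realized_in p
  let σ : L.Sentence := Formula.iExs α (θ.relabel Sum.inr)
  have hM : M ⊨ σ := Formula.realize_iExs.2
    ⟨y, Formula.realize_relabel.2 (CompleteType.formula_mem_typeOf.1 hθ)⟩
  obtain ⟨x, hx⟩ := Formula.realize_iExs.1
    ((hT.realize_sentence_iff σ N).2 ((hT.realize_sentence_iff σ M).1 hM))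
  exact ⟨x, by simpa only [Formula.realize_relabel, Sum.elim_comp_inr] using hx⟩

/-- The types of the first components of realizations of `q` form a closed set, which is dense:
by completeness every consistent formula is realized in a model realizing `q`. -/
theorem exists_restrict_inl_eq_and_restrict_inr_eq (hT : T.IsComplete) [Finite α]
    (p : T.CompleteType α) (q : T.CompleteType β) :
    ∃ r : T.CompleteType (α ⊕ β), r.restrict Sum.inl = p ∧ r.restrict Sum.inr = q := by
  set S : Set (T.CompleteType α) := restrict Sum.inl '' (restrict Sum.inr ⁻¹' {q})
  have hclosed : IsClosed S :=
    ((isClosed_singleton.preimage (continuous_restrict _)).isCompact.image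
      (continuous_restrict _)).isClosed
  have hdense : Dense S := by
    refine _root_.CompleteType.isTopologicalBasis_range_typesWith.dense_iff.2 ?_
    rintro _ ⟨σ, rfl⟩ ⟨p', hp'⟩
    obtain ⟨M, y, rfl⟩ := T.exists_modelType_is_realized_in q
    obtain ⟨x, hx⟩ := exists_realize_of_mem hT (θ := Formula.equivSentence.symm σ)
      (by simpa using hp') M
    exact ⟨T.typeOf x, by simpa using hx, T.typeOf (Sum.elim x y),
      by simp [restrict_typeOf], by simp [restrict_typeOf]⟩
  obtain ⟨r, hr, hrp⟩ := (hclosed.closure_eq.symm.trans hdense.closure_eq).symm ▸ mem_univ p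
  exact ⟨r, hrp, hr⟩

theorem exists_typesWith_eq_of_isClopen {U : Set (T.CompleteType α)} (hU : IsClopen U) :
    ∃ σ, T.typesWith σ = U := by
  obtain ⟨S, hS, rfl⟩ := (isCompact_open_iff_eq_finite_iUnion_of_isTopologicalBasis T.typesWith
    _root_.CompleteType.isTopologicalBasis_range_typesWith
    (fun σ => (_root_.CompleteType.isClosed_typesWith σ).isCompact) U).1
    ⟨hU.isClosed.isCompact, hU.isOpen⟩
  clear hU
  induction S, hS using Set.Finite.induction_on with
  | empty => exact ⟨∼⊤, by simp [typesWith_not, typesWith_top]⟩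
  | @insert τ S _ _ ih =>
    obtain ⟨σ, hσ⟩ := ih
    refine ⟨∼(∼τ ⊓ ∼σ), ?_⟩
    rw [typesWith_not, typesWith_inf, typesWith_not, typesWith_not, compl_inter, compl_compl,
      compl_compl, hσ, biUnion_insert]

end CompleteType

section TypeRel

variable {I : Type*}

variable (T) in
def typeRel (φ : I → L.Formula (α ⊕ α)) : Set (T.CompleteType α × T.CompleteType α) :=
  (fun r => (r.restrict Sum.inl, r.restrict Sum.inr)) ''
    ⋂ i, T.typesWith (Formula.equivSentence (φ i))

theorem isClosed_typeRel (φ : I → L.Formula (α ⊕ α)) : IsClosed (typeRel T φ) :=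
  ((isClosed_iInter fun _ => _root_.CompleteType.isClosed_typesWith _).isCompact.image
    ((CompleteType.continuous_restrict _).prodMk (CompleteType.continuous_restrict _))).isClosed

theorem typeOf_mem_typeRel {φ : I → L.Formula (α ⊕ α)} {M : Type*} [L.Structure M]
    [Nonempty M] [M ⊨ T] {x y : α → M} (h : ∀ i, (φ i).Realize (Sum.elim x y)) :
    (T.typeOf x, T.typeOf y) ∈ typeRel T φ :=
  ⟨T.typeOf (Sum.elim x y), by simpa using h, by simp [CompleteType.restrict_typeOf]⟩

theorem exists_realize_of_mem_typeRel [Countable L.Symbols] [Countable α]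
    {φ : I → L.Formula (α ⊕ α)} {p q : T.CompleteType α} (h : (p, q) ∈ typeRel T φ) :
    ∃ (N : ModelType.{v, w, u} T) (x y : α → N),
      T.typeOf x = p ∧ T.typeOf y = q ∧ ∀ i, (φ i).Realize (Sum.elim x y) := by
  obtain ⟨r, hr, hrpq⟩ := h
  obtain ⟨N, z, rfl⟩ := exists_modelType_typeOf_eq.{u} r
  simp only [CompleteType.restrict_typeOf, Prod.mk.injEq] at hrpq
  refine ⟨N, z ∘ Sum.inl, z ∘ Sum.inr, hrpq.1, hrpq.2, ?_⟩
  simpa [Sum.elim_comp_inl_inr] using hr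

theorem exists_modelType_typeOf_eq_and_typeOf_eq [Countable L.Symbols] [Finite α] [Countable β]
    (hT : T.IsComplete) (p : T.CompleteType α) (q : T.CompleteType β) :
    ∃ (N : ModelType.{v, w, u} T) (x : α → N) (y : β → N),
      T.typeOf x = p ∧ T.typeOf y = q := by
  obtain ⟨r, rfl, rfl⟩ := CompleteType.exists_restrict_inl_eq_and_restrict_inr_eq hT p q
  obtain ⟨N, z, rfl⟩ := exists_modelType_typeOf_eq.{u} r
  exact ⟨N, z ∘ Sum.inl, z ∘ Sum.inr, (CompleteType.restrict_typeOf _ _).symm,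
    (CompleteType.restrict_typeOf _ _).symm⟩

end TypeRel

end FirstOrder.Language.Theory

open FirstOrder.Language.Theory

section InfEqRel

variable {L : FirstOrder.Language.{v, w}} {T : L.Theory} {n : ℕ} {I : Type u'}
  {φ : I → L.Formula (Fin n ⊕ Fin n)}

theorem IsInfEqRel.realize_of_typeOf_eq (heq : IsInfEqRel.{u} T φ)
    (hcoarse : CoarserThanTypeEq.{u} T φ) {K : Type u} [L.Structure K] [Nonempty K] [hK : K ⊨ T]
    {x y x' y' : Fin n → K} (hx : T.typeOf x = T.typeOf x') (hy : T.typeOf y' = T.typeOf y)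
    (h : ∀ i, (φ i).Realize (Sum.elim x' y')) : ∀ i, (φ i).Realize (Sum.elim x y) :=
  heq.2.2 K hK x y' y (heq.2.2 K hK x x' y' (hcoarse K hK x x' (typeOf_eq_typeOf_iff.1 hx)) h)
    (hcoarse K hK y' y (typeOf_eq_typeOf_iff.1 hy))

theorem IsInfEqRel.realize_of_typeOf_mem_typeRel [Countable L.Symbols] (hT : T.IsComplete)
    (heq : IsInfEqRel.{u} T φ) (hcoarse : CoarserThanTypeEq.{u} T φ) {M : Type u}
    [L.Structure M] [Nonempty M] [M ⊨ T] {a b : Fin n → M}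
    (h : (T.typeOf a, T.typeOf b) ∈ typeRel T φ) : ∀ i, (φ i).Realize (Sum.elim a b) := by
  obtain ⟨N, c, d, hc, hd, hcd⟩ := exists_realize_of_mem_typeRel.{u} h
  obtain ⟨K, x, y, hx, hy⟩ := exists_modelType_typeOf_eq_and_typeOf_eq.{u} hT
    (T.typeOf (Sum.elim a b)) (T.typeOf (Sum.elim c d))
  rw [← Sum.elim_comp_inl_inr x] at hx
  rw [← Sum.elim_comp_inl_inr y] at hy
  obtain ⟨hxa, hxb⟩ := typeOf_eq_and_typeOf_eq_of_sum_elim hx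
  obtain ⟨hyc, hyd⟩ := typeOf_eq_and_typeOf_eq_of_sum_elim hy
  have hxy := heq.realize_of_typeOf_eq hcoarse (hxa.trans (hc.symm.trans hyc.symm))
    (hyd.trans (hd.trans hxb.symm)) fun i => (typeOf_eq_typeOf_iff.1 hy (φ i)).2 (hcd i)
  exact fun i => (typeOf_eq_typeOf_iff.1 hx (φ i)).1 (hxy i)

def IsInfEqRel.typeRelSetoid [Countable L.Symbols] (hT : T.IsComplete)
    (heq : IsInfEqRel.{u} T φ) (hcoarse : CoarserThanTypeEq.{u} T φ) :
    Setoid (T.CompleteType (Fin n)) where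
  r p q := (p, q) ∈ typeRel T φ
  iseqv := by
    refine ⟨fun p => ?_, fun h => ?_, fun {p q s} h₁ h₂ => ?_⟩
    · obtain ⟨N, x, rfl⟩ := exists_modelType_typeOf_eq.{u} p
      exact typeOf_mem_typeRel (heq.1 N N.is_model x)
    · obtain ⟨N, x, y, rfl, rfl, hxy⟩ := exists_realize_of_mem_typeRel.{u} h
      exact typeOf_mem_typeRel (heq.2.1 N N.is_model x y hxy)
    · obtain ⟨N, x, y, rfl, rfl, hxy⟩ := exists_realize_of_mem_typeRel.{u} h₁
      obtain ⟨K, w, z, hw, rfl⟩ :=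
        exists_modelType_typeOf_eq_and_typeOf_eq.{u} hT (T.typeOf (Sum.elim x y)) s
      rw [← Sum.elim_comp_inl_inr w] at hw
      obtain ⟨hwx, hwy⟩ := typeOf_eq_and_typeOf_eq_of_sum_elim hw
      rw [← hwy] at h₂
      rw [← hwx]
      exact typeOf_mem_typeRel (heq.2.2 K K.is_model _ _ _
        (fun i => (typeOf_eq_typeOf_iff.1 hw (φ i)).2 (hxy i))
        (heq.realize_of_typeOf_mem_typeRel hT hcoarse h₂))

end InfEqRel

theorem exists_separating_formulas_of_not_infEqRel_general {L : FirstOrder.Language.{v, w}}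
    [Countable L.Symbols]
    (T : L.Theory) (hcomp : T.IsComplete)
    (hsmall : ∀ k : ℕ, Countable (T.CompleteType (Fin k)))
    {n : ℕ} {I : Type u'} (φ : I → L.Formula (Fin n ⊕ Fin n))
    (heq : IsInfEqRel.{u} T φ) (hcoarse : CoarserThanTypeEq.{u} T φ)
    (M : Type u) [L.Structure M] [Nonempty M] (hM : M ⊨ T)
    (a b : Fin n → M) (i₀ : I) (hab : ¬(φ i₀).Realize (Sum.elim a b)) :
    ∃ χ ψ : L.Formula (Fin n),
      χ.Realize a ∧ ψ.Realize b ∧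
      (∀ (M' : Type u) [L.Structure M'] [Nonempty M'], M' ⊨ T →
        ∀ c : Fin n → M', χ.Realize c ∨ ψ.Realize c) ∧
      (∀ (M' : Type u) [L.Structure M'] [Nonempty M'], M' ⊨ T →
        ∀ c d : Fin n → M', χ.Realize c → ψ.Realize d →
          ∃ i, ¬(φ i).Realize (Sum.elim c d)) := by
  have := hsmall n
  let s := heq.typeRelSetoid hcomp hcoarse
  have hab' : ¬s (T.typeOf a) (T.typeOf b) :=
    fun h => hab (heq.realize_of_typeOf_mem_typeRel hcomp hcoarse h i₀)
  obtain ⟨U, hU, haU, hbU, hU_sat⟩ :=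
    exists_isClopen_saturated_of_not_rel (s := s) (isClosed_typeRel φ) hab'
  obtain ⟨σ, rfl⟩ := CompleteType.exists_typesWith_eq_of_isClopen hU
  refine ⟨Formula.equivSentence.symm σ, ∼(Formula.equivSentence.symm σ), by simpa using haU,
    by simpa using hbU, fun _ _ _ _ c => by simpa using em _, ?_⟩
  intro M' _ _ _ c d hc hd
  by_contra! hcd
  have hdU := hU_sat _ _ (typeOf_mem_typeRel hcd) (by simpa using hc)
  exact Formula.realize_not.1 hd (by simpa using hdU)

/-- Let `T` be a small satisfiable complete theory in a countable language and
`(φ_i)` an ∞-definable equivalence relation over `∅` modulo `T` coarser than equality of types.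
If in some model `M ⊨ T` the tuples `a`, `b` are not related, then there are formulas `χ(x̄)`,
`ψ(x̄)` with `M ⊨ χ(a)`, `M ⊨ ψ(b)`, such that `χ(x̄) ∨ ψ(x̄)` holds of every tuple in every
model of `T`, and `χ(x̄) ∧ ψ(ȳ)` implies the failure of the relation in every model of `T`. -/
theorem exists_separating_formulas_of_not_infEqRel {L : FirstOrder.Language.{v, w}}
    [Countable L.Symbols]
    (T : L.Theory) (hsat : T.IsSatisfiable) (hcomp : T.IsComplete)
    (hsmall : ∀ k : ℕ, Countable (T.CompleteType (Fin k)))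
    {n : ℕ} (hn : 0 < n) {I : Type u'} (φ : I → L.Formula (Fin n ⊕ Fin n))
    (heq : IsInfEqRel.{u} T φ) (hcoarse : CoarserThanTypeEq.{u} T φ)
    (M : Type u) [L.Structure M] [Nonempty M] (hM : M ⊨ T)
    (a b : Fin n → M) (i₀ : I) (hab : ¬(φ i₀).Realize (Sum.elim a b)) :
    ∃ χ ψ : L.Formula (Fin n),
      χ.Realize a ∧ ψ.Realize b ∧
      (∀ (M' : Type u) [L.Structure M'] [Nonempty M'], M' ⊨ T →
        ∀ c : Fin n → M', χ.Realize c ∨ ψ.Realize c) ∧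
      (∀ (M' : Type u) [L.Structure M'] [Nonempty M'], M' ⊨ T →
        ∀ c d : Fin n → M', χ.Realize c → ψ.Realize d →
          ∃ i, ¬(φ i).Realize (Sum.elim c d)) :=
  exists_separating_formulas_of_not_infEqRel_general T hcomp hsmall φ heq hcoarse M hM a b i₀ hab
end

section
/- Let L be a first-order language, M an L-structure, N an elementary substructure of M, and ā, b̄ : Fin n → M two n-tuples that have the same type over N. Then there exist an L-structure M', an elementary embedding f : M → M', and a sequence (d̄_k)_{k<ω} of n-tuples of M' such that both sequences ⟨f∘ā, d̄_0, d̄_1, d̄_2, …⟩ and ⟨f∘b̄, d̄_0, d̄_1, d̄_2, …⟩ are indiscernible over the image f(N). (In particular, for any A ⊆ N, both sequences are indiscernible over f(A); this witnesses d_A(ā, b̄) = 1 whenever ā and b̄ have the same type over some model containing A.) -/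
/-!
Since `N` is a model, `tp(a/N)` is finitely satisfiable in `N`, so it is the average type over `N`
of some ultrafilter `U` on `n`-tuples from `N`; as `b ≡_N a`, it is also `tp(b/N)`. Take an
ultrafilter `W` on sequences `s : ℕ → Nⁿ` whose restriction to the first `K` terms is the tensor
power `U^{⊗K}`, and let `dⱼ` be the class of `s ↦ s j` in the ultrapower `M^W`. Restricting
`U^{⊗K}` to any increasing choice of `r` coordinates gives `U^{⊗r}`, so by Łoś a formula over `N`
holds of `(d_{k₁}, …, d_{kᵣ})` iff it holds `U^{⊗r}`-almost everywhere, for every increasing `k`.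
Put in front of the `d`'s, a tuple realizing the average type of `U` over `N` acts as one more,
innermost, `U`-generic coordinate, so the same holds for `⟨a, d₀, d₁, …⟩` and `⟨b, d₀, d₁, …⟩`.
-/

open FirstOrder FirstOrder.Language

universe u v w

/-- A sequence `e` of `n`-tuples of an `L`-structure `M'` is indiscernible over a set `B ⊆ M'`:
for every formula `φ(z̄, x̄₁, …, x̄ᵣ)` (with `z̄` an `m`-tuple and each `x̄ₜ` an `n`-tuple of free
variables), all strictly increasing index tuples `k`, `l` and all parameters `c̄` from `B`, the
formula holds of `(c̄, e_{k 1}, …, e_{k r})` iff it holds of `(c̄, e_{l 1}, …, e_{l r})`. -/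
def IndiscernibleOver (L : FirstOrder.Language.{v, w}) (M' : Type*) [L.Structure M']
    (B : Set M') (n : ℕ) (e : ℕ → Fin n → M') : Prop :=
  ∀ (m r : ℕ) (φ : L.Formula (Fin m ⊕ (Fin r × Fin n))) (k l : Fin r → ℕ),
    StrictMono k → StrictMono l →
    ∀ c : Fin m → M', (∀ j, c j ∈ B) →
      (φ.Realize (Sum.elim c fun p => e (k p.1) p.2) ↔
        φ.Realize (Sum.elim c fun p => e (l p.1) p.2))

open Filter

namespace Fin

@[elab_as_elim]
theorem strictMono_cases {m : ℕ} {motive : ∀ r (j : Fin r → Fin (m + 1)), StrictMono j → Prop}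
    (succ_comp : ∀ r (j : Fin r → Fin m) (hj : StrictMono j),
      motive r (Fin.succ ∘ j) (Fin.strictMono_succ.comp hj))
    (cons_zero : ∀ r (j : Fin r → Fin m) (hj : StrictMono j),
      motive (r + 1) (Fin.cons 0 (Fin.succ ∘ j))
        (Fin.strictMono_cons.2 ⟨fun _ => Fin.succ_pos _, Fin.strictMono_succ.comp hj⟩))
    {r : ℕ} {j : Fin r → Fin (m + 1)} (hj : StrictMono j) : motive r j hj := by
  by_cases h0 : ∀ i, j i ≠ 0
  · obtain ⟨j', hj', rfl⟩ : ∃ j' : Fin r → Fin m, StrictMono j' ∧ j = Fin.succ ∘ j' :=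
      ⟨fun i => (j i).pred (h0 i), fun a b hab => Fin.pred_lt_pred_iff.2 (hj hab),
        funext fun i => (Fin.succ_pred _ _).symm⟩
    exact succ_comp r j' hj'
  · obtain ⟨i, hi⟩ := not_forall_not.1 h0
    cases r with
    | zero => exact i.elim0
    | succ r =>
      have hj0 : j 0 = 0 := nonpos_iff_eq_zero.1 (hi ▸ hj.monotone (Fin.zero_le i))
      have hsucc (i : Fin r) : j i.succ ≠ 0 := (hj0 ▸ hj (Fin.succ_pos i)).ne'
      obtain ⟨j', hj', rfl⟩ : ∃ j' : Fin r → Fin m, StrictMono j' ∧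
          j = Fin.cons 0 (Fin.succ ∘ j') :=
        ⟨fun i => (j i.succ).pred (hsucc i),
          fun a b hab => Fin.pred_lt_pred_iff.2 (hj (Fin.succ_lt_succ_iff.2 hab)),
          funext fun i => by cases i using Fin.cases <;> simp [hj0]⟩
      exact cons_zero r j' hj'

end Fin

namespace Ultrafilter

variable {I : Type*}

theorem eq_of_subsingleton [Subsingleton I] (f g : Ultrafilter I) : f = g := by
  obtain ⟨a, rfl⟩ := f.eq_pure_of_finite
  obtain ⟨b, rfl⟩ := g.eq_pure_of_finite
  rw [Subsingleton.elim a b]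

def tensorPow (U : Ultrafilter I) (r : ℕ) : Ultrafilter (Fin r → I) :=
  Nat.rec (pure Fin.elim0) (fun _ T => T.bind fun t => U.map (Fin.cons · t)) r

variable {U : Ultrafilter I}

theorem eventually_tensorPow_succ {r : ℕ} {p : (Fin (r + 1) → I) → Prop} :
    (∀ᶠ t in U.tensorPow (r + 1), p t) ↔ ∀ᶠ t in U.tensorPow r, ∀ᶠ x in U, p (Fin.cons x t) :=
  Iff.rfl

theorem map_tensorPow_comp_of_strictMono {m r : ℕ} {j : Fin r → Fin m} (hj : StrictMono j) :
    (U.tensorPow m).map (· ∘ j) = U.tensorPow r := by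
  induction m generalizing r with
  | zero =>
    have : IsEmpty (Fin r) := ⟨fun i => (j i).elim0⟩
    exact eq_of_subsingleton _ _
  | succ m ih =>
    induction hj using Fin.strictMono_cases with
    | succ_comp r j hj =>
      ext s
      rw [← ih hj, mem_map, mem_map]
      change (∀ᶠ t in U.tensorPow m, ∀ᶠ x in U, Fin.cons x t ∘ Fin.succ ∘ j ∈ s) ↔
        ∀ᶠ t in U.tensorPow m, t ∘ j ∈ s
      simp only [← Function.comp_assoc, Fin.cons_comp_succ, eventually_const]
    | cons_zero r j hj =>
      ext s
      rw [mem_map]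
      change (∀ᶠ t in U.tensorPow m, ∀ᶠ x in U, Fin.cons x t ∘ Fin.cons 0 (Fin.succ ∘ j) ∈ s) ↔
        ∀ᶠ t in U.tensorPow r, ∀ᶠ x in U, Fin.cons x t ∈ s
      simp only [Fin.comp_cons, Fin.cons_zero, ← Function.comp_assoc, Fin.cons_comp_succ]
      rw [← ih hj]
      rfl

theorem exists_map_restrict_eq_of_map_init (μ : ∀ K, Ultrafilter (Fin K → I))
    (hμ : ∀ K, (μ (K + 1)).map Fin.init = μ K) :
    ∃ W : Ultrafilter (ℕ → I), ∀ K, W.map (fun s (i : Fin K) => s i) = μ K := by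
  have : Nonempty I := ⟨(μ 1).nonempty_of_mem univ_mem |>.some 0⟩
  let F (K : ℕ) : Filter (ℕ → I) := Filter.comap (fun s (i : Fin K) => s i) (μ K)
  have hF : Antitone F := antitone_nat_of_succ_le fun K => by
    simp only [F, ← hμ K, coe_map]
    exact (comap_mono le_comap_map).trans_eq Filter.comap_comap
  have hFne (K : ℕ) : (F K).NeBot :=
    (μ K).neBot.comap_of_surj Fin.val_injective.surjective_comp_right
  have := iInf_neBot_of_directed' hF.directed_ge hFne
  refine ⟨.of (⨅ K, F K), fun K => eq_of_le ?_⟩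
  rw [coe_map, map_le_iff_le_comap]
  exact (of_le _).trans (iInf_le F K)

theorem exists_map_restrict_eq_tensorPow (U : Ultrafilter I) :
    ∃ W : Ultrafilter (ℕ → I), ∀ K, W.map (fun s (i : Fin K) => s i) = U.tensorPow K :=
  exists_map_restrict_eq_of_map_init _ fun _ =>
    map_tensorPow_comp_of_strictMono Fin.strictMono_castSucc

end Ultrafilter

section AverageType

variable {L : FirstOrder.Language.{v, w}} {M : Type u} [L.Structure M]

theorem FirstOrder.Language.Formula.realize_sumElim_iff_of_forall_fin {S : Set M} {β : Type*}
    {a b : β → M}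
    (h : ∀ (m : ℕ) (φ : L.Formula (Fin m ⊕ β)) (c : Fin m → M), (∀ j, c j ∈ S) →
      (φ.Realize (Sum.elim c a) ↔ φ.Realize (Sum.elim c b)))
    {α : Type*} [Finite α] (φ : L.Formula (α ⊕ β)) {c : α → M} (hc : ∀ j, c j ∈ S) :
    φ.Realize (Sum.elim c a) ↔ φ.Realize (Sum.elim c b) := by
  obtain ⟨m, ⟨e⟩⟩ := Finite.exists_equiv_fin α
  simpa only [Formula.realize_relabel, Sum.elim_comp_map, Function.comp_id, Function.comp_assoc,
    e.symm_comp_self] using h m (φ.relabel (Sum.map e id)) (c ∘ e.symm) fun j => hc _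

namespace FirstOrder.Language.ElementarySubstructure

variable (N : L.ElementarySubstructure M) {β : Type}

theorem exists_realize_of_realize {α : Type*} [Finite β] {φ : L.Formula (α ⊕ β)} {c : α → N}
    {a : β → M} (h : φ.Realize (Sum.elim (Subtype.val ∘ c) a)) :
    ∃ e : β → N, φ.Realize (Sum.elim (Subtype.val ∘ c) (Subtype.val ∘ e)) := by
  have : (φ.iExs β).Realize (N.subtype ∘ c) := Formula.realize_iExs.2 ⟨a, h⟩
  obtain ⟨e, he⟩ := Formula.realize_iExs.1 ((N.subtype.map_formula _ c).1 this)
  refine ⟨e, ?_⟩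
  rwa [← N.subtype.map_formula, Sum.comp_elim, coe_subtype] at he

def RealizesAverage (U : Ultrafilter (β → N)) (a : β → M) : Prop :=
  ∀ (α : Type) [Finite α] (φ : L.Formula (α ⊕ β)) (c : α → N),
    (∀ᶠ e : β → N in U, φ.Realize (Sum.elim (Subtype.val ∘ c) (Subtype.val ∘ e))) ↔
      φ.Realize (Sum.elim (Subtype.val ∘ c) a)

theorem exists_ultrafilter_eventually_realize_iff [Finite β] (a : β → M) :
    ∃ U : Ultrafilter (β → N), ∀ φ : L.Formula (N ⊕ β),
      (∀ᶠ e : β → N in U, φ.Realize (Sum.elim Subtype.val (Subtype.val ∘ e))) ↔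
        φ.Realize (Sum.elim Subtype.val a) := by
  let X (φ : L.Formula (N ⊕ β)) : Set (β → N) :=
    {e | φ.Realize (Sum.elim Subtype.val (Subtype.val ∘ e))}
  let T := {φ : L.Formula (N ⊕ β) // φ.Realize (Sum.elim Subtype.val a)}
  have hdir : Directed (· ≥ ·) fun φ : T => 𝓟 (X φ) := fun φ ψ =>
    ⟨⟨φ.1 ⊓ ψ.1, Formula.realize_inf.2 ⟨φ.2, ψ.2⟩⟩,
      principal_mono.2 fun _ h => (Formula.realize_inf.1 h).1,
      principal_mono.2 fun _ h => (Formula.realize_inf.1 h).2⟩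
  have hne (φ : T) : (𝓟 (X φ)).NeBot :=
    principal_neBot_iff.2 (N.exists_realize_of_realize (c := id) φ.2)
  have : Nonempty T := ⟨⟨⊤, Formula.realize_top.2 trivial⟩⟩
  have := iInf_neBot_of_directed' hdir hne
  let U := Ultrafilter.of (⨅ φ : T, 𝓟 (X φ))
  have hU (φ : T) : X φ ∈ U := Ultrafilter.of_le _ (mem_iInf_of_mem φ (mem_principal_self _))
  refine ⟨U, fun φ => ⟨fun h => ?_, fun h => hU ⟨φ, h⟩⟩⟩
  by_contra hφ
  exact U.compl_mem_iff_notMem.1 (hU ⟨φ.not, hφ⟩) h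

theorem exists_realizesAverage [Finite β] (a : β → M) :
    ∃ U : Ultrafilter (β → N), N.RealizesAverage U a := by
  obtain ⟨U, hU⟩ := N.exists_ultrafilter_eventually_realize_iff a
  refine ⟨U, fun α _ φ c => ?_⟩
  simpa only [Formula.realize_relabel, Sum.elim_comp_map, Function.comp_id] using
    hU (φ.relabel (Sum.map c id))

variable {N}

theorem RealizesAverage.eventually_tensorPow_cons_iff [Finite β] {U : Ultrafilter (β → N)}
    {g : β → M} (hg : N.RealizesAverage U g) {α : Type} [Finite α] {K : ℕ}
    (φ : L.Formula (α ⊕ Fin (K + 1) × β)) (c : α → N) :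
    (∀ᶠ u : Fin K → β → N in U.tensorPow K, φ.Realize (Sum.elim (Subtype.val ∘ c) fun p =>
        Fin.cons (α := fun _ => β → M) g (fun q i => (u q i : M)) p.1 p.2)) ↔
      ∀ᶠ t : Fin (K + 1) → β → N in U.tensorPow (K + 1),
        φ.Realize (Sum.elim (Subtype.val ∘ c) fun p => (t p.1 p.2 : M)) := by
  -- `σ` keeps the first block of tuple variables free and turns the others into parameters.
  let σ : α ⊕ Fin (K + 1) × β → (α ⊕ Fin K × β) ⊕ β :=
    Sum.elim (Sum.inl ∘ Sum.inl) fun p =>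
      Fin.cases (Sum.inr p.2) (fun q => Sum.inl (Sum.inr (q, p.2))) p.1
  have hσ (u : Fin K → β → N) (x : β → M) :
      (φ.relabel σ).Realize (Sum.elim (Subtype.val ∘ Sum.elim c fun p => u p.1 p.2) x) ↔
        φ.Realize (Sum.elim (Subtype.val ∘ c) fun p =>
          Fin.cons (α := fun _ => β → M) x (fun q i => (u q i : M)) p.1 p.2) := by
    rw [Formula.realize_relabel]
    congr! 1
    funext y
    rcases y with j | ⟨q, i⟩
    · rfl
    · cases q using Fin.cases <;> rfl
  rw [Ultrafilter.eventually_tensorPow_succ]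
  refine eventually_congr (Eventually.of_forall fun u => ?_)
  rw [← hσ, ← hg (α ⊕ Fin K × β)]
  refine eventually_congr (Eventually.of_forall fun x => (hσ u _).trans ?_)
  congr! 2
  funext ⟨q, i⟩
  cases q using Fin.cases <;> rfl

end FirstOrder.Language.ElementarySubstructure

end AverageType

theorem IndiscernibleOver.image {L : FirstOrder.Language.{v, w}} {M M₂ : Type*} [L.Structure M]
    [L.Structure M₂] (f : M ↪ₑ[L] M₂) {B : Set M} {n : ℕ} {e : ℕ → Fin n → M}
    (h : IndiscernibleOver L M B n e) : IndiscernibleOver L M₂ (f '' B) n fun k => f ∘ e k := by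
  intro m r φ k l hk hl c hc
  choose b hbB hbc using hc
  obtain rfl : c = f ∘ b := funext fun j => (hbc j).symm
  have hcomp (k : Fin r → ℕ) : (Sum.elim (f ∘ b) fun p : Fin r × Fin n => (f ∘ e (k p.1)) p.2) =
      f ∘ Sum.elim b fun p => e (k p.1) p.2 := (Sum.comp_elim _ _ _).symm
  rw [hcomp, hcomp, f.map_formula, f.map_formula]
  exact h m r φ k l hk hl b hbB

theorem indiscernibleOver_fin_zero {L : FirstOrder.Language.{v, w}} {M : Type*} [L.Structure M]
    (B : Set M) (e : ℕ → Fin 0 → M) : IndiscernibleOver L M B 0 e := by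
  intro m r φ k l _ _ c _
  have (k : Fin r → ℕ) : (fun p : Fin r × Fin 0 => e (k p.1) p.2) = fun p => p.2.elim0 :=
    funext fun p => p.2.elim0
  rw [this k, this l]

namespace FirstOrder.Language.Ultraproduct

variable (L : FirstOrder.Language.{v, w}) {α : Type*} (u : Ultrafilter α) (M : Type*)
  [L.Structure M] [Nonempty M]

def diagonal : M ↪ₑ[L] (u : Filter α).Product fun _ => M where
  toFun x := ((fun _ => x : α → M) : (u : Filter α).Product fun _ => M)
  map_formula' _ φ v := (realize_formula_cast φ fun i _ => v i).trans eventually_const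

end FirstOrder.Language.Ultraproduct

section Ultrapower

open FirstOrder.Language.Ultraproduct

variable {L : FirstOrder.Language.{v, w}} {M : Type u} [L.Structure M] [Nonempty M]
  {N : L.ElementarySubstructure M} {n : ℕ}

def ultrapowerSeq (W : Ultrafilter (ℕ → Fin n → N)) (g : Fin n → M) :
    ℕ → Fin n → (W : Filter (ℕ → Fin n → N)).Product fun _ => M :=
  Stream'.cons (diagonal L W M ∘ g) fun j i => ((fun s => (s j i : M)) : (ℕ → Fin n → N) → M)

theorem ultrapowerSeq_val_eq (W : Ultrafilter (ℕ → Fin n → N)) (g : Fin n → M) {K : ℕ}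
    (q : Fin (K + 1)) (i : Fin n) :
    ultrapowerSeq W g q i = ((fun s => Fin.cons (α := fun _ => Fin n → M) g
      (fun q i => (s q i : M)) q i) : (ℕ → Fin n → N) → M) := by
  cases q using Fin.cases <;> rfl

theorem realize_ultrapowerSeq_iff {U : Ultrafilter (Fin n → N)} {W : Ultrafilter (ℕ → Fin n → N)}
    {K : ℕ} (hW : W.map (fun s (i : Fin K) => s i) = U.tensorPow K) {α : Type*}
    (φ : L.Formula (α ⊕ Fin (K + 1) × Fin n)) (c : α → N) (g : Fin n → M) :
    φ.Realize (Sum.elim (diagonal L W M ∘ Subtype.val ∘ c) fun p => ultrapowerSeq W g p.1 p.2) ↔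
      ∀ᶠ u : Fin K → Fin n → N in U.tensorPow K, φ.Realize (Sum.elim (Subtype.val ∘ c) fun p =>
        Fin.cons (α := fun _ => Fin n → M) g (fun q i => (u q i : M)) p.1 p.2) := by
  have : (Sum.elim (diagonal L W M ∘ Subtype.val ∘ c) fun p : Fin (K + 1) × Fin n =>
      ultrapowerSeq W g p.1 p.2) =
      fun x => (((fun s => Sum.elim (Subtype.val ∘ c) (fun p : Fin (K + 1) × Fin n =>
        Fin.cons (α := fun _ => Fin n → M) g (fun q i => (s q i : M)) p.1 p.2) x) :
          (ℕ → Fin n → N) → M) : (W : Filter (ℕ → Fin n → N)).Product fun _ => M) := by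
    funext x
    rcases x with j | ⟨q, i⟩
    · rfl
    · exact ultrapowerSeq_val_eq W g q i
  rw [this]
  refine (realize_formula_cast φ _).trans ?_
  rw [← hW]
  rfl

theorem realize_ultrapowerSeq_iff_eventually_tensorPow {U : Ultrafilter (Fin n → N)}
    {W : Ultrafilter (ℕ → Fin n → N)}
    (hW : ∀ K, W.map (fun s (i : Fin K) => s i) = U.tensorPow K) {g : Fin n → M}
    (hg : N.RealizesAverage U g) {m r : ℕ} (φ : L.Formula (Fin m ⊕ Fin r × Fin n))
    (c : Fin m → N) {k : Fin r → ℕ} (hk : StrictMono k) :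
    φ.Realize (Sum.elim (diagonal L W M ∘ Subtype.val ∘ c) fun p =>
        ultrapowerSeq W g (k p.1) p.2) ↔
      ∀ᶠ t : Fin r → Fin n → N in U.tensorPow r,
        φ.Realize (Sum.elim (Subtype.val ∘ c) fun p => (t p.1 p.2 : M)) := by
  obtain ⟨K, hK⟩ : ∃ K, ∀ i, k i < K + 1 :=
    ⟨Finset.univ.sup k, fun i => Nat.lt_succ_of_le (Finset.le_sup (Finset.mem_univ i))⟩
  let k' : Fin r → Fin (K + 1) := fun i => ⟨k i, hK i⟩
  have hk' : StrictMono k' := fun _ _ h => hk h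
  let ψ := φ.relabel (Sum.map id (Prod.map k' id))
  calc _ ↔ ψ.Realize (Sum.elim (diagonal L W M ∘ Subtype.val ∘ c) fun p =>
          ultrapowerSeq W g p.1 p.2) := by
        rw [Formula.realize_relabel, Sum.elim_comp_map]
        rfl
    _ ↔ ∀ᶠ u : Fin K → Fin n → N in U.tensorPow K, ψ.Realize (Sum.elim (Subtype.val ∘ c) fun p =>
          Fin.cons (α := fun _ => Fin n → M) g (fun q i => (u q i : M)) p.1 p.2) :=
        realize_ultrapowerSeq_iff (hW K) ψ c g
    _ ↔ ∀ᶠ t : Fin (K + 1) → Fin n → N in U.tensorPow (K + 1),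
          ψ.Realize (Sum.elim (Subtype.val ∘ c) fun p => (t p.1 p.2 : M)) :=
        hg.eventually_tensorPow_cons_iff ψ c
    _ ↔ _ := by
        rw [← U.map_tensorPow_comp_of_strictMono hk']
        simp only [ψ, Formula.realize_relabel, Sum.elim_comp_map]
        rfl

theorem indiscernibleOver_ultrapowerSeq {U : Ultrafilter (Fin n → N)}
    {W : Ultrafilter (ℕ → Fin n → N)}
    (hW : ∀ K, W.map (fun s (i : Fin K) => s i) = U.tensorPow K) {g : Fin n → M}
    (hg : N.RealizesAverage U g) :
    IndiscernibleOver L _ (diagonal L W M '' N) n (ultrapowerSeq W g) := by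
  intro m r φ k l hk hl c hc
  choose b hbN hbc using hc
  obtain rfl : c = diagonal L W M ∘ Subtype.val ∘ fun j => (⟨b j, hbN j⟩ : N) :=
    funext fun j => (hbc j).symm
  exact (realize_ultrapowerSeq_iff_eventually_tensorPow hW hg φ _ hk).trans
    (realize_ultrapowerSeq_iff_eventually_tensorPow hW hg φ _ hl).symm

end Ultrapower

/-- Let `N` be an elementary substructure of `M` and `a`, `b` two `n`-tuples of
`M` with the same type over `N`. Then there are an elementary extension `f : M ↪ₑ[L] M'` and a
sequence `(d_k)_{k<ω}` of `n`-tuples of `M'` such that both `⟨f ∘ a, d₀, d₁, …⟩` and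
`⟨f ∘ b, d₀, d₁, …⟩` are indiscernible over the image `f '' N`. -/
theorem exists_indiscernibles_witnessing_same_type_over_model
    {L : FirstOrder.Language.{v, w}} {M : Type u} [L.Structure M]
    (N : L.ElementarySubstructure M) {n : ℕ} (a b : Fin n → M)
    (hab : ∀ (m : ℕ) (φ : L.Formula (Fin m ⊕ Fin n)) (c : Fin m → M), (∀ j, c j ∈ N) →
      (φ.Realize (Sum.elim c a) ↔ φ.Realize (Sum.elim c b))) :
    ∃ (M' : Type (max u v w)) (S : L.Structure M'),
      letI := S
      ∃ (f : M ↪ₑ[L] M') (d : ℕ → Fin n → M'),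
        IndiscernibleOver L M' (f '' (N : Set M)) n
          (fun k => match k with | 0 => f ∘ a | (j + 1) => d j) ∧
        IndiscernibleOver L M' (f '' (N : Set M)) n
          (fun k => match k with | 0 => f ∘ b | (j + 1) => d j) := by
  rcases isEmpty_or_nonempty M with hM | hM
  · obtain rfl : n = 0 := by
      rcases n with _ | n
      · rfl
      · exact isEmptyElim (a 0)
    let e : M ≃ ULift.{max v w} M := Equiv.ulift.symm
    let _ := e.inducedStructure (L := L)
    exact ⟨ULift M, _, (e.inducedStructureEquiv (L := L)).toElementaryEmbedding,
      fun _ => Fin.elim0, indiscernibleOver_fin_zero _ _, indiscernibleOver_fin_zero _ _⟩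
  obtain ⟨U, hUa⟩ := N.exists_realizesAverage a
  have hUb : N.RealizesAverage U b := fun α _ φ c =>
    (hUa α φ c).trans (Formula.realize_sumElim_iff_of_forall_fin hab φ fun j => (c j).2)
  obtain ⟨W, hW⟩ := U.exists_map_restrict_eq_tensorPow
  let e : ((W : Filter (ℕ → Fin n → N)).Product fun _ => M) ≃ ULift.{max v w} _ :=
    Equiv.ulift.symm
  let _ := e.inducedStructure (L := L)
  let f := (e.inducedStructureEquiv (L := L)).toElementaryEmbedding.comp
    (Ultraproduct.diagonal L W M)
  have key (g : Fin n → M) (hg : N.RealizesAverage U g) :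
      IndiscernibleOver L _ (f '' N) n fun k => match k with
        | 0 => f ∘ g
        | j + 1 => e ∘ ultrapowerSeq W a (j + 1) := by
    convert (indiscernibleOver_ultrapowerSeq hW hg).image
      (e.inducedStructureEquiv (L := L)).toElementaryEmbedding using 1
    · rw [Set.image_image]
      rfl
    · funext k
      cases k <;> rfl
  exact ⟨_, _, f, fun j => e ∘ ultrapowerSeq W a (j + 1), key a hUa, key b hUb⟩
end

section
/- There is no family (ψ_j)_{j ∈ J} of L_ℚ-formulas, each with free variables among a pair x, y of single variables and each defining an equivalence relation modulo T₀, such that for every model N of T₀ and all elements x, y of N: (∀ rationals a < b, N ⊨ (P_a(x) → P_b(y)) ∧ (P_a(y) → P_b(x))) if and only if (∀ j, N ⊨ ψ_j(x, y)). That is, the ∞-definable bounded equivalence relation E of the Pillay–Poizat example is not equivalent, modulo T₀, to any conjunction of definable equivalence relations. -/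
open FirstOrder FirstOrder.Language

universe u

/-- The language `L_ℚ` with a unary relation symbol `P_a` for each rational `a` and no other
symbols. -/
def LQ : FirstOrder.Language :=
  ⟨fun _ => Empty, fun n => match n with | 1 => ℚ | _ => Empty⟩

/-- The `L_ℚ`-structure on `ℚ` in which `P_a` is interpreted as `{x : ℚ | x ≤ a}`. -/
instance : LQ.Structure ℚ where
  funMap {_} f _ := Empty.elim f
  RelMap {n} := fun r x =>
    match n, r, x with
    | 1, a, x => x 0 ≤ a

/-- `T₀` is the complete `L_ℚ`-theory of the structure `ℚ`. -/
def T0 : LQ.Theory := LQ.completeTheory ℚ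

/-- The formula `P_a(xᵢ)` in the two free variables `x₀, x₁`. -/
def pFml (a : ℚ) (i : Fin 2) : LQ.Formula (Fin 2) :=
  Relations.formula₁ (show LQ.Relations 1 from a) (Term.var i)

/-- For rationals `a < b`, the formula `(P_a(x) → P_b(y)) ∧ (P_a(y) → P_b(x))`; the conjunction
of all these formulas defines the equivalence relation `E` of the Pillay–Poizat example. -/
def eFml (a b : ℚ) : LQ.Formula (Fin 2) :=
  (pFml a 0 ⟹ pFml b 1) ⊓ (pFml a 1 ⟹ pFml b 0)

/-- A formula `ψ(x, y)` in two free variables defines an equivalence relation modulo `T₀`. -/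
def DefinesEqRelQ (ψ : LQ.Formula (Fin 2)) : Prop :=
  ∀ (N : Type u) [LQ.Structure N] [Nonempty N], N ⊨ T0 →
    (∀ x : N, ψ.Realize ![x, x]) ∧
    (∀ x y : N, ψ.Realize ![x, y] → ψ.Realize ![y, x]) ∧
    (∀ x y z : N, ψ.Realize ![x, y] → ψ.Realize ![y, z] → ψ.Realize ![x, z])

/- ### Auxiliary lemmas -/

instance : ℚ ⊨ T0 := inferInstanceAs (ℚ ⊨ LQ.completeTheory ℚ)

lemma realize_pFml (a : ℚ) (i : Fin 2) (v : Fin 2 → ℚ) : (pFml a i).Realize v ↔ v i ≤ a := by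
  rw [pFml, Formula.realize_rel₁]
  exact Iff.rfl

lemma realize_eFml (a b : ℚ) (v : Fin 2 → ℚ) :
    (eFml a b).Realize v ↔ ((v 0 ≤ a → v 1 ≤ b) ∧ (v 1 ≤ a → v 0 ≤ b)) := by
  rw [eFml, Formula.realize_inf, Formula.realize_imp, Formula.realize_imp,
    realize_pFml, realize_pFml, realize_pFml, realize_pFml]

lemma comp_pair {α β : Type*} (g : α → β) (x y : α) :
    (g ∘ ![x, y]) = ![g x, g y] := by
  funext i; fin_cases i <;> simp

/-- The sentences (in the language with two constants) expressing the `E`-relations between the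
two constants. -/
def EP (σ : (LQ[[Fin 2]]).Sentence) : Prop :=
  ∃ a b : ℚ, a < b ∧ σ = Formula.equivSentence (eFml a b)

/-- The theory `T₀` together with all `E`-conditions on the two constants. -/
def Tbig : (LQ[[Fin 2]]).Theory :=
  (LQ.lhomWithConstants (Fin 2)).onTheory T0 ∪ {σ | EP σ}

open Classical in
/-- A positive rational witnessing an `E`-condition sentence. -/
noncomputable def gap (σ : (LQ[[Fin 2]]).Sentence) : ℚ :=
  if h : EP σ then h.choose_spec.choose - h.choose else 1

lemma gap_pos (σ : (LQ[[Fin 2]]).Sentence) : 0 < gap σ := by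
  rw [gap]; split_ifs with h
  · have h1 := h.choose_spec.choose_spec.1; linarith
  · norm_num

lemma gap_spec {σ : (LQ[[Fin 2]]).Sentence} (h : EP σ) :
    ∃ a b : ℚ, a < b ∧ σ = Formula.equivSentence (eFml a b) ∧ gap σ = b - a := by
  refine ⟨h.choose, h.choose_spec.choose, h.choose_spec.choose_spec.1,
    h.choose_spec.choose_spec.2, ?_⟩
  rw [gap, dif_pos h]

/-- Chaining small steps using reflexivity and transitivity. -/
lemma chain_total {r : ℚ → ℚ → Prop} (hrefl : ∀ x, r x x)
    (htrans : ∀ x y z, r x y → r y z → r x z) {ε : ℚ} (hε : 0 < ε)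
    (hstep : ∀ x y, |x - y| ≤ ε → r x y) (x y : ℚ) : r x y := by
  suffices h : ∀ n : ℕ, ∀ x y : ℚ, |x - y| ≤ n * ε → r x y by
    refine h ⌈|x - y| / ε⌉₊ x y ?_
    rw [← div_le_iff₀ hε]
    exact Nat.le_ceil _
  intro n
  induction n with
  | zero =>
    intro x y h
    have h0 : |x - y| = 0 := le_antisymm (by simpa using h) (abs_nonneg _)
    have : x = y := sub_eq_zero.mp (abs_eq_zero.mp h0)
    subst this
    exact hrefl x
  | succ n ih =>
    intro x y h
    push_cast at h
    have hn : (0:ℚ) ≤ (n : ℚ) * ε := mul_nonneg (Nat.cast_nonneg n) hε.le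
    rcases le_total x y with hxy | hxy
    · have habs : y - x ≤ (n + 1) * ε := by
        rw [abs_sub_comm, abs_of_nonneg (by linarith)] at h; linarith
      rcases le_total y (x + n * ε) with hc | hc
      · exact ih x y (by rw [abs_sub_comm, abs_of_nonneg (by linarith)]; linarith)
      · refine htrans x (x + n * ε) y (ih _ _ ?_) (hstep _ _ ?_)
        · rw [abs_of_nonpos (by linarith)]; linarith
        · rw [abs_of_nonpos (by linarith)]; linarith
    · have habs : x - y ≤ (n + 1) * ε := by
        rw [abs_of_nonneg (by linarith)] at h; linarith
      rcases le_total (x - n * ε) y with hc | hc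
      · exact ih x y (by rw [abs_of_nonneg (by linarith)]; linarith)
      · refine htrans x (x - n * ε) y (ih _ _ ?_) (hstep _ _ ?_)
        · rw [abs_of_nonneg (by linarith)]; linarith
        · rw [abs_of_nonneg (by linarith)]; linarith

/-- Pillay–Poizat example. The ∞-definable bounded equivalence relation `E`,
given by the conjunction of the formulas `(P_a(x) → P_b(y)) ∧ (P_a(y) → P_b(x))` for `a < b`, is
not equivalent modulo `T₀` to any conjunction of definable equivalence relations. -/
theorem eRel_not_conj_of_definable_eqRels :
    ¬∃ S : Set (LQ.Formula (Fin 2)),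
      (∀ ψ ∈ S, DefinesEqRelQ.{u} ψ) ∧
      ∀ (N : Type u) [LQ.Structure N] [Nonempty N], N ⊨ T0 →
        ∀ x y : N,
          ((∀ a b : ℚ, a < b → (eFml a b).Realize ![x, y]) ↔
            ∀ ψ ∈ S, ψ.Realize ![x, y]) := by
  classical
  rintro ⟨S, hS, hmain⟩
  letI iQ : LQ.Structure (ULift.{u} ℚ) :=
    Equiv.inducedStructure (Equiv.ulift.symm : ℚ ≃ ULift.{u} ℚ)
  let gQ : ℚ ≃[LQ] ULift.{u} ℚ := Equiv.inducedStructureEquiv _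
  haveI hQT : (ULift.{u} ℚ) ⊨ T0 := StrongHomClass.theory_model gQ
  -- Key claim: every formula in `S` holds of every pair of rationals.
  have key : ∀ ψ ∈ S, ∀ x y : ℚ, ψ.Realize ![x, y] := by
    intro ψ hψ
    -- Step 1: `Tbig` entails `ψ(c₀, c₁)`.
    have step1 : Tbig ⊨ᵇ Formula.equivSentence ψ := by
      rw [Theory.models_sentence_iff]
      intro M
      letI : LQ.Structure M := (LQ.lhomWithConstants (Fin 2)).reduct M
      haveI : (LQ.lhomWithConstants (Fin 2)).IsExpansionOn M := LHom.isExpansionOn_reduct _ _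
      have hMT : M ⊨ Tbig := M.is_model
      unfold Tbig at hMT
      rw [Theory.model_union_iff] at hMT
      haveI hM0 : M ⊨ T0 := (LHom.onTheory_model _ _).1 hMT.1
      letI iM : LQ.Structure (ULift.{u} M) :=
        Equiv.inducedStructure (Equiv.ulift.symm : M ≃ ULift.{u} M)
      let gM : M ≃[LQ] ULift.{u} M := Equiv.inducedStructureEquiv _
      have hMT0 : (ULift.{u} M) ⊨ T0 := StrongHomClass.theory_model gM
      have hcon : (fun i : Fin 2 => ((LQ.con i : (LQ[[Fin 2]]).Constants) : M))
          = ![((LQ.con (0 : Fin 2) : (LQ[[Fin 2]]).Constants) : M), ((LQ.con (1 : Fin 2) : (LQ[[Fin 2]]).Constants) : M)] := by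
        funext i; fin_cases i <;> rfl
      have hE : ∀ a b : ℚ, a < b →
          (eFml a b).Realize ![gM ((LQ.con (0 : Fin 2) : (LQ[[Fin 2]]).Constants) : M), gM ((LQ.con (1 : Fin 2) : (LQ[[Fin 2]]).Constants) : M)] := by
        intro a b hab
        have hmem : Formula.equivSentence (eFml a b) ∈ Tbig := Or.inr ⟨a, b, hab, rfl⟩
        have hreal : M ⊨ Formula.equivSentence (eFml a b) :=
          Tbig.realize_sentence_of_mem hmem
        rw [Formula.realize_equivSentence, hcon] at hreal
        rw [← comp_pair gM]
        exact (StrongHomClass.realize_formula gM _).2 hreal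
      have hψreal := (hmain (ULift.{u} M) hMT0 (gM ((LQ.con (0 : Fin 2) : (LQ[[Fin 2]]).Constants) : M)) (gM ((LQ.con (1 : Fin 2) : (LQ[[Fin 2]]).Constants) : M))).1 hE ψ hψ
      rw [← comp_pair gM, StrongHomClass.realize_formula gM] at hψreal
      rw [Formula.realize_equivSentence, hcon]
      exact hψreal
    -- Step 2: compactness.
    obtain ⟨T0f, hsub, hT0f⟩ := Theory.models_iff_finset_models.1 step1
    -- Step 3: a positive lower bound for the gaps appearing in `T0f`.
    set fs : Finset ℚ := insert 1 (T0f.image gap) with hfs_def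
    have hfs : fs.Nonempty := ⟨1, Finset.mem_insert_self _ _⟩
    set ε : ℚ := fs.min' hfs with hε_def
    have hεpos : 0 < ε := by
      rw [hε_def, Finset.lt_min'_iff]
      intro q hq
      rcases Finset.mem_insert.1 hq with rfl | hq
      · norm_num
      · obtain ⟨σ, _, rfl⟩ := Finset.mem_image.1 hq
        exact gap_pos σ
    -- Step 4: `ψ` relates any two rationals at distance at most `ε`.
    have hstep : ∀ x y : ℚ, |x - y| ≤ ε → ψ.Realize ![x, y] := by
      intro x y hxy
      letI : (constantsOn (Fin 2)).Structure ℚ := constantsOn.structure ![x, y]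
      have hconQ : (fun i : Fin 2 => ((LQ.con i : (LQ[[Fin 2]]).Constants) : ℚ)) = ![x, y] := by
        funext i; fin_cases i <;> rfl
      haveI hQf : ℚ ⊨ (T0f : (LQ[[Fin 2]]).Theory) := by
        rw [Theory.model_iff]
        intro σ hσ
        rcases hsub hσ with hσ1 | hσ2
        · obtain ⟨σ0, hσ0, rfl⟩ := hσ1
          rw [LHom.realize_onSentence]
          exact T0.realize_sentence_of_mem hσ0
        · obtain ⟨a, b, hab, hσeq, hgapeq⟩ := gap_spec hσ2
          have hgap : ε ≤ gap σ :=
            Finset.min'_le _ _ (Finset.mem_insert_of_mem (Finset.mem_image_of_mem _ hσ))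
          rw [hgapeq] at hgap
          rw [hσeq, Formula.realize_equivSentence, hconQ, realize_eFml]
          have h0 : (![x, y] : Fin 2 → ℚ) 0 = x := rfl
          have h1 : (![x, y] : Fin 2 → ℚ) 1 = y := rfl
          rw [h0, h1]
          rw [abs_le] at hxy
          constructor <;> intro hle <;> linarith [hxy.1, hxy.2]
      have hψQ : ℚ ⊨ Formula.equivSentence ψ := hT0f.realize_sentence ℚ
      rw [Formula.realize_equivSentence, hconQ] at hψQ
      exact hψQ
    -- Step 5: chain steps using reflexivity and transitivity.
    obtain ⟨hrefl, -, htrans⟩ := hS ψ hψ (ULift.{u} ℚ) hQT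
    have hrefl' : ∀ x : ℚ, ψ.Realize ![x, x] := fun x => by
      have h := hrefl (gQ x)
      rwa [← comp_pair gQ, StrongHomClass.realize_formula gQ] at h
    have htrans' : ∀ x y z : ℚ, ψ.Realize ![x, y] → ψ.Realize ![y, z] → ψ.Realize ![x, z] := by
      intro x y z h1 h2
      have h := htrans (gQ x) (gQ y) (gQ z)
        (by rw [← comp_pair gQ]; exact (StrongHomClass.realize_formula gQ ψ).2 h1)
        (by rw [← comp_pair gQ]; exact (StrongHomClass.realize_formula gQ ψ).2 h2)
      rwa [← comp_pair gQ, StrongHomClass.realize_formula gQ] at h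
    exact chain_total hrefl' htrans' hεpos hstep
  -- Derive the contradiction at the pair `(0, 1)` in `ULift ℚ`.
  have hfin := (hmain (ULift.{u} ℚ) hQT (gQ 0) (gQ 1)).2 (fun ψ hψ => by
    rw [← comp_pair gQ]; exact (StrongHomClass.realize_formula gQ ψ).2 (key ψ hψ 0 1))
  have hbad := hfin 0 (1/2) (by norm_num)
  rw [← comp_pair gQ, StrongHomClass.realize_formula gQ, realize_eFml] at hbad
  have h0 : (![(0:ℚ), 1] : Fin 2 → ℚ) 0 = 0 := rfl
  have h1 : (![(0:ℚ), 1] : Fin 2 → ℚ) 1 = 1 := rfl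
  rw [h0, h1] at hbad
  have := hbad.1 le_rfl
  norm_num at this
end

section
/- Let N be any model of T₀ and a a rational number. Suppose x is an element of N realizing the type a⁺ or the type a⁻. Then for every element y of N: E(x, y) holds (i.e., for all rationals c < d, N ⊨ (P_c(x) → P_d(y)) ∧ (P_c(y) → P_d(x))) if and only if y realizes a⁺ or y realizes a⁻. That is, in every model of T₀ the set of realizations of a⁺ together with the set of realizations of a⁻ forms exactly one E-class. -/
open FirstOrder FirstOrder.Language

universe u

/-- `x` realizes the type `a⁺` in a model `N` of `T₀`: `P_b(x)` holds for every rational `b > a`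
and fails for every rational `b ≤ a`. -/
def RealizesPlus {N : Type u} [LQ.Structure N] (a : ℚ) (x : N) : Prop :=
  (∀ b : ℚ, a < b → Structure.RelMap (show LQ.Relations 1 from b) ![x]) ∧
  (∀ b : ℚ, b ≤ a → ¬Structure.RelMap (show LQ.Relations 1 from b) ![x])

/-- `x` realizes the type `a⁻` in a model `N` of `T₀`: `P_b(x)` holds for every rational `b ≥ a`
and fails for every rational `b < a`. -/
def RealizesMinus {N : Type u} [LQ.Structure N] (a : ℚ) (x : N) : Prop :=
  (∀ b : ℚ, a ≤ b → Structure.RelMap (show LQ.Relations 1 from b) ![x]) ∧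
  (∀ b : ℚ, b < a → ¬Structure.RelMap (show LQ.Relations 1 from b) ![x])

/-!
Realizing `a⁺` or `a⁻` says exactly that `x` lies in the cut at `a`: `P_b(x)` holds for `b > a`
and fails for `b < a`, with `P_a(x)` left open. The relation `E(x, y)` says that `x` and `y`
determine the same cut, because between any two distinct rationals there is a third.
-/

namespace LQ

variable {N : Type u} [LQ.Structure N]

def HoldsP (b : ℚ) (z : N) : Prop :=
  Structure.RelMap (show LQ.Relations 1 from b) ![z]

def AtCut (a : ℚ) (z : N) : Prop :=
  (∀ b : ℚ, a < b → HoldsP b z) ∧ ∀ b : ℚ, b < a → ¬HoldsP b z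

theorem realizesPlus_or_realizesMinus_iff_atCut (a : ℚ) (z : N) :
    RealizesPlus a z ∨ RealizesMinus a z ↔ AtCut a z := by
  constructor
  · rintro (⟨hgt, hle⟩ | ⟨hge, hlt⟩)
    · exact ⟨hgt, fun b hb => hle b hb.le⟩
    · exact ⟨fun b hb => hge b hb.le, hlt⟩
  · rintro ⟨hgt, hlt⟩
    by_cases ha : HoldsP a z
    · exact Or.inr ⟨fun b hb => hb.eq_or_lt.elim (· ▸ ha) (hgt b), hlt⟩
    · exact Or.inl ⟨hgt, fun b hb => hb.eq_or_lt.elim (· ▸ ha) (hlt b)⟩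

theorem realize_eFml_iff (c d : ℚ) (x y : N) :
    (eFml c d).Realize ![x, y] ↔
      (HoldsP c x → HoldsP d y) ∧ (HoldsP c y → HoldsP d x) := by
  simp only [eFml, pFml, Formula.realize_inf, Formula.realize_imp]
  erw [Formula.realize_rel₁, Formula.realize_rel₁, Formula.realize_rel₁, Formula.realize_rel₁]
  simp [HoldsP]

theorem AtCut.holdsP_of_holdsP {a c d : ℚ} {u v : N} (hu : AtCut a u) (hv : AtCut a v)
    (hcd : c < d) (hc : HoldsP c u) : HoldsP d v :=
  hv.1 d ((not_lt.1 fun hca => hu.2 c hca hc).trans_lt hcd)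

theorem AtCut.of_forall_holdsP_imp {a : ℚ} {x y : N} (hx : AtCut a x)
    (hxy : ∀ c d : ℚ, c < d → HoldsP c x → HoldsP d y)
    (hyx : ∀ c d : ℚ, c < d → HoldsP c y → HoldsP d x) : AtCut a y := by
  constructor
  · intro d had
    obtain ⟨c, hac, hcd⟩ := exists_between had
    exact hxy c d hcd (hx.1 c hac)
  · intro c hca hc
    obtain ⟨d, hcd, hda⟩ := exists_between hca
    exact hx.2 d hda (hyx c d hcd hc)

end LQ

theorem eClass_of_realizesPlus_or_realizesMinus_general
    (N : Type u) [LQ.Structure N] (a : ℚ) (x : N)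
    (hx : RealizesPlus a x ∨ RealizesMinus a x) :
    ∀ y : N,
      (∀ c d : ℚ, c < d → (eFml c d).Realize ![x, y]) ↔
        (RealizesPlus a y ∨ RealizesMinus a y) := by
  intro y
  rw [LQ.realizesPlus_or_realizesMinus_iff_atCut] at hx ⊢
  simp only [LQ.realize_eFml_iff]
  constructor
  · intro hE
    exact hx.of_forall_holdsP_imp (fun c d hcd => (hE c d hcd).1)
      (fun c d hcd => (hE c d hcd).2)
  · intro hy c d hcd
    exact ⟨hx.holdsP_of_holdsP hy hcd, hy.holdsP_of_holdsP hx hcd⟩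

/-- In any model `N` of `T₀`, if `x` realizes `a⁺` or `a⁻`, then for any `y`,
`E(x, y)` holds iff `y` realizes `a⁺` or `a⁻`: the realizations of `a⁺` together with those of
`a⁻` form exactly one `E`-class. -/
theorem eClass_of_realizesPlus_or_realizesMinus
    (N : Type u) [LQ.Structure N] [Nonempty N] (hN : N ⊨ T0) (a : ℚ) (x : N)
    (hx : RealizesPlus a x ∨ RealizesMinus a x) :
    ∀ y : N,
      (∀ c d : ℚ, c < d → (eFml c d).Realize ![x, y]) ↔
        (RealizesPlus a y ∨ RealizesMinus a y) :=
  eClass_of_realizesPlus_or_realizesMinus_general N a x hx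
end
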